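/- arXiv:2605.09261 — 5 statements merged into one kernel-verified Lean document; each statement's English description precedes it below -/
import Mathlib

section
/- For a partition λ of n with ℓ parts, the Schur polynomial s_λ equals the determinant of the ℓ×ℓ matrix whose (i,j) entry is the complete homogeneous symmetric polynomial h_{λ_i - i + j}, with the convention h_k = 0 for k < 0 and h_0 = 1. -/
/-!
Let `H(t) = ∑ hₙ tⁿ = ∏ᵢ (1 - xᵢ t)⁻¹` and, for each variable `j`, let
`E⁽ʲ⁾(t) = ∏_{i ≠ j} (1 - xᵢ t)`, a polynomial of degree `< ℓ`. Then `H(t) E⁽ʲ⁾(t) = (1 - xⱼ t)⁻¹`,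
and comparing coefficients of `t^α` gives `xⱼ^α = ∑_{m < ℓ} h_{α - m} [tᵐ] E⁽ʲ⁾`. Hence for every
exponent vector `α` the matrix `(xⱼ^{αᵢ})` factors as `(h_{αᵢ - (ℓ - 1 - k)})_{i,k}` times the
matrix `([t^{ℓ-1-k}] E⁽ʲ⁾)_{k,j}`, which does not depend on `α`. For `α = λ + δ` the first factor is
the Jacobi–Trudi matrix, and for `α = δ` it is unitriangular; taking determinants of both
factorisations gives `a_{λ+δ} = det (h_{λᵢ-i+j}) · a_δ`.
-/

open MvPolynomial

/-- Complete homogeneous symmetric polynomial indexed by an integer, with the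
convention `h k = 0` for `k < 0` (and `h 0 = 1`). -/
noncomputable def hInt (ℓ : ℕ) (k : ℤ) : MvPolynomial (Fin ℓ) ℤ :=
  if 0 ≤ k then MvPolynomial.hsymm (Fin ℓ) ℤ k.toNat else 0

open Finset

namespace PowerSeries

variable {S : Type*} [CommRing S]

theorem mk_pow_mul_one_sub_C_mul_X (a : S) : mk (a ^ ·) * (1 - C a * X) = 1 := by
  simpa [rescale_mk, rescale_X] using congrArg (rescale a) (mk_one_mul_one_sub_eq_one (S := S))

theorem mul_prod_erase_one_sub_C_mul_X {ι : Type*} [DecidableEq ι] {f : S⟦X⟧} {a : ι → S}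
    {s : Finset ι} (hf : f * ∏ i ∈ s, (1 - C (a i) * X) = 1) {j : ι} (hj : j ∈ s) :
    f * ∏ i ∈ s.erase j, (1 - C (a i) * X) = mk (a j ^ ·) := by
  rw [← mul_prod_erase s _ hj] at hf
  linear_combination mk (a j ^ ·) * hf -
    (f * ∏ i ∈ s.erase j, (1 - C (a i) * X)) * mk_pow_mul_one_sub_C_mul_X (a j)

theorem coeff_prod_one_sub_C_mul_X_of_card_lt {ι : Type*} (a : ι → S) (s : Finset ι) {m : ℕ}
    (hm : #s < m) : coeff m (∏ i ∈ s, (1 - C (a i) * X)) = 0 := by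
  induction s using Finset.cons_induction generalizing m with
  | empty => rw [prod_empty, coeff_one, if_neg (by simp at hm; omega)]
  | cons i s hi ih =>
    rw [card_cons] at hm
    obtain ⟨n, rfl⟩ : ∃ n, m = n + 1 := ⟨m - 1, by omega⟩
    rw [prod_cons, sub_mul, one_mul, mul_assoc, map_sub, coeff_C_mul, coeff_succ_X_mul,
      ih (by omega), ih (by omega), mul_zero, sub_zero]

theorem coeff_mul_eq_sum_range {f g : S⟦X⟧} {N : ℕ} (hg : ∀ m, N ≤ m → coeff m g = 0) (n : ℕ) :
    coeff n (f * g) = ∑ m ∈ range N, (if m ≤ n then coeff (n - m) f else 0) * coeff m g := by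
  rw [mul_comm, coeff_mul,
    Nat.sum_antidiagonal_eq_sum_range_succ (fun i k => coeff i g * coeff k f)]
  simp only [ite_mul, zero_mul]
  rw [← sum_filter]
  refine (sum_subset (fun m hm => ?_) fun m hm hmN => ?_).symm.trans
    (sum_congr rfl fun m _ => mul_comm _ _)
  · simp only [mem_filter, mem_range] at hm ⊢
    omega
  · simp only [mem_filter, mem_range, not_and, not_le] at hm hmN
    rw [hg m (not_lt.1 fun h => (hmN h).not_ge (by omega)), zero_mul]

end PowerSeries

namespace MvPolynomial

variable (σ R : Type*) [Fintype σ] [DecidableEq σ] [CommRing R]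

noncomputable def hsymmSeries : PowerSeries (MvPolynomial σ R) := PowerSeries.mk (hsymm σ R)

theorem hsymmSeries_eq_prod : hsymmSeries σ R = ∏ i, PowerSeries.mk (X i ^ ·) := by
  refine PowerSeries.ext fun n => ?_
  rw [hsymmSeries, PowerSeries.coeff_mk, PowerSeries.coeff_prod]
  unfold hsymm
  simp only [PowerSeries.coeff_mk]
  refine sum_bij' (fun (s : Sym σ n) _ => Multiset.toFinsupp s.1)
    (fun l hl => ⟨Finsupp.toMultiset l, ?_⟩) ?_ ?_ ?_ ?_ ?_
  · rw [Finsupp.card_toMultiset, Finsupp.sum_fintype _ _ fun _ => rfl]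
    exact (mem_finsuppAntidiag.1 hl).1
  · intro s _
    rw [mem_finsuppAntidiag]
    exact ⟨(Multiset.sum_count_eq_card fun a _ => mem_univ a).trans s.2, subset_univ _⟩
  · exact fun _ _ => mem_univ _
  · intro s _
    ext1
    simp
  · intro l _
    simp
  · intro s _
    rw [prod_multiset_map_count]
    refine prod_subset (subset_univ _) fun i _ hi => ?_
    rw [Multiset.mem_toFinset, ← Multiset.count_eq_zero] at hi
    rw [hi, pow_zero]

theorem hsymmSeries_mul_prod_one_sub_C_mul_X :
    hsymmSeries σ R * ∏ i, (1 - PowerSeries.C (X i) * PowerSeries.X) = 1 := by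
  rw [hsymmSeries_eq_prod, ← prod_mul_distrib]
  exact prod_eq_one fun i _ => PowerSeries.mk_pow_mul_one_sub_C_mul_X _

end MvPolynomial

section JacobiTrudi

variable {ℓ : ℕ}

theorem hInt_natCast_sub (n m : ℕ) :
    hInt ℓ ((n : ℤ) - m) = if m ≤ n then hsymm (Fin ℓ) ℤ (n - m) else 0 := by
  unfold hInt
  split_ifs with h₁ h₂ h₂
  · congr 1
    omega
  · omega
  · omega
  · rfl

theorem det_hInt_sub_eq_one :
    (Matrix.of fun i k : Fin ℓ => hInt ℓ ((k : ℕ) - (i : ℕ))).det = 1 := by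
  have htri : (Matrix.of fun i k : Fin ℓ => hInt ℓ ((k : ℕ) - (i : ℕ))).IsUpperTriangular :=
    fun i k (hki : k < i) => by simp [hInt_natCast_sub, hki.not_ge]
  rw [Matrix.det_of_isUpperTriangular htri]
  exact prod_eq_one fun i _ => by simp [hInt_natCast_sub, hsymm_zero]

theorem X_pow_eq_sum_hInt_mul_coeff (α : ℕ) (j : Fin ℓ) :
    X j ^ α = ∑ k : Fin ℓ, hInt ℓ (α - (ℓ - 1 - k : ℕ)) * PowerSeries.coeff (ℓ - 1 - k)
      (∏ i ∈ univ.erase j, (1 - PowerSeries.C (X i) * PowerSeries.X)) := by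
  have hvanish : ∀ m, ℓ ≤ m → PowerSeries.coeff m (∏ i ∈ univ.erase j,
      (1 - PowerSeries.C (X i : MvPolynomial (Fin ℓ) ℤ) * PowerSeries.X)) = 0 :=
    fun m hm => PowerSeries.coeff_prod_one_sub_C_mul_X_of_card_lt _ _
      (by simp; have := j.pos; omega)
  calc X j ^ α = PowerSeries.coeff α (PowerSeries.mk (X j ^ ·)) := (PowerSeries.coeff_mk _ _).symm
    _ = ∑ m ∈ range ℓ, hInt ℓ (α - m) * PowerSeries.coeff m
          (∏ i ∈ univ.erase j, (1 - PowerSeries.C (X i) * PowerSeries.X)) := by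
      rw [← PowerSeries.mul_prod_erase_one_sub_C_mul_X (hsymmSeries_mul_prod_one_sub_C_mul_X _ _)
        (mem_univ j), PowerSeries.coeff_mul_eq_sum_range hvanish]
      simp only [hsymmSeries, PowerSeries.coeff_mk, ← hInt_natCast_sub]
    _ = _ := by
      rw [← Fin.sum_univ_eq_sum_range]
      refine (Fintype.sum_equiv Fin.revPerm _ _ fun k => ?_).symm
      rw [Fin.revPerm_apply, Fin.val_rev]
      congr 3 <;> omega

theorem of_X_pow_eq_of_hInt_mul (α : Fin ℓ → ℕ) :
    Matrix.of (fun i j : Fin ℓ => (X j : MvPolynomial (Fin ℓ) ℤ) ^ α i) =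
      Matrix.of (fun i k : Fin ℓ => hInt ℓ (α i - (ℓ - 1 - k : ℕ))) *
        Matrix.of (fun k j : Fin ℓ => PowerSeries.coeff (ℓ - 1 - k)
          (∏ i ∈ univ.erase j, (1 - PowerSeries.C (X i) * PowerSeries.X))) :=
  Matrix.ext fun i j => X_pow_eq_sum_hInt_mul_coeff (α i) j

end JacobiTrudi

theorem jacobi_trudi_general {ℓ : ℕ} (lam : Fin ℓ → ℕ) :
    Matrix.det (Matrix.of fun i j : Fin ℓ =>
        (X j : MvPolynomial (Fin ℓ) ℤ) ^ (lam i + (ℓ - 1 - (i : ℕ)))) =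
      Matrix.det (Matrix.of fun i j : Fin ℓ =>
        hInt ℓ ((lam i : ℤ) - (i : ℕ) + (j : ℕ))) *
      Matrix.det (Matrix.of fun i j : Fin ℓ =>
        (X j : MvPolynomial (Fin ℓ) ℤ) ^ (ℓ - 1 - (i : ℕ))) := by
  have hshift : Matrix.of (fun i k : Fin ℓ =>
      hInt ℓ ((lam i + (ℓ - 1 - i) : ℕ) - (ℓ - 1 - k : ℕ))) =
      Matrix.of fun i k : Fin ℓ => hInt ℓ ((lam i : ℤ) - (i : ℕ) + (k : ℕ)) :=
    Matrix.ext fun i k => congrArg (hInt ℓ) (by omega)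
  have hunitri : Matrix.of (fun i k : Fin ℓ => hInt ℓ ((ℓ - 1 - i : ℕ) - (ℓ - 1 - k : ℕ))) =
      Matrix.of fun i k : Fin ℓ => hInt ℓ ((k : ℕ) - (i : ℕ)) :=
    Matrix.ext fun i k => congrArg (hInt ℓ) (by omega)
  rw [of_X_pow_eq_of_hInt_mul, of_X_pow_eq_of_hInt_mul (fun i => ℓ - 1 - i), Matrix.det_mul,
    Matrix.det_mul, hshift, hunitri, det_hInt_sub_eq_one, one_mul]

theorem jacobi_trudi {ℓ : ℕ} (lam : Fin ℓ → ℕ) (hanti : Antitone lam) :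
    Matrix.det (Matrix.of fun i j : Fin ℓ =>
        (X j : MvPolynomial (Fin ℓ) ℤ) ^ (lam i + (ℓ - 1 - (i : ℕ)))) =
      Matrix.det (Matrix.of fun i j : Fin ℓ =>
        hInt ℓ ((lam i : ℤ) - (i : ℕ) + (j : ℕ))) *
      Matrix.det (Matrix.of fun i j : Fin ℓ =>
        (X j : MvPolynomial (Fin ℓ) ℤ) ^ (ℓ - 1 - (i : ℕ))) :=
  jacobi_trudi_general lam
end

section
/- Let λ be a partition with ℓ parts and for a permutation w in the symmetric group S_ℓ define the integer vector μ(w) by μ(w)_i = λ_{w^{-1}(i)} + i - w^{-1}(i). If all entries of μ(w) are nonnegative, then for every u ≤ w in Bruhat order, all entries of μ(u) are also nonnegative. -/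
/-!
STATEMENT 1: Let λ be a partition with ℓ parts and for w ∈ S_ℓ define
μ(w)_i = λ_{w⁻¹(i)} + i − w⁻¹(i).  If all entries of μ(w) are nonnegative,
then for every u ≤ w in Bruhat order, all entries of μ(u) are nonnegative.

We define the Bruhat order on `Equiv.Perm (Fin ℓ)` in the standard way: it is
the reflexive-transitive closure of the relation "multiply by a transposition
(reflection) and strictly increase the length", where the length of a
permutation is its number of inversions.
-/

/-- The number of inversions of a permutation, i.e. its Coxeter length. -/
def invCount {m : ℕ} (w : Equiv.Perm (Fin m)) : ℕ :=
  (Finset.univ.filter fun p : Fin m × Fin m => p.1 < p.2 ∧ w p.2 < w p.1).card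

/-- The Bruhat order on the symmetric group `S_m`. -/
def bruhatLE {m : ℕ} (u w : Equiv.Perm (Fin m)) : Prop :=
  Relation.ReflTransGen
    (fun a b => (∃ i j : Fin m, i ≠ j ∧ b = a * Equiv.swap i j) ∧ invCount a < invCount b) u w

/-!
Reindexing by `k = w⁻¹ i`, nonnegativity of `μ(w)` says `k ≤ λ_k + w(k)` for every `k`. A Bruhat
cover `a < a · (i j)` with `i < j` is exactly a transposition with `a(i) < a(j)`, since otherwise
it would lose inversions. Passing from `b = a · (i j)` down to `a` changes the inequality only at
`k = i`, where `λ_i ≥ λ_j` and `i < j` make it follow from the one for `b` at `j`, and at `k = j`,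
where `a(j) > a(i) = b(j)` only helps.
-/

open Equiv Finset

section Inversions

variable {m : ℕ}

def inversions (w : Perm (Fin m)) : Finset (Fin m × Fin m) :=
  univ.filter fun p => p.1 < p.2 ∧ w p.2 < w p.1

@[simp]
lemma mem_inversions {w : Perm (Fin m)} {p : Fin m × Fin m} :
    p ∈ inversions w ↔ p.1 < p.2 ∧ w p.2 < w p.1 := by
  simp [inversions]

lemma invCount_eq_card_inversions (w : Perm (Fin m)) : invCount w = #(inversions w) := rfl

variable {a : Perm (Fin m)} {i j : Fin m}

lemma map_swap_mem_inversions_mul_swap (hij : i < j) (hv : a i < a j) {p : Fin m × Fin m}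
    (hp : p ∈ inversions a) (hp' : p ∉ inversions (a * swap i j)) :
    Prod.map (swap i j) (swap i j) p ∈ inversions (a * swap i j) := by
  obtain ⟨p, q⟩ := p
  simp only [mem_inversions, Perm.mul_apply, Prod.map_fst, Prod.map_snd, swap_apply_self,
    not_and, not_lt] at hp hp' ⊢
  obtain ⟨hpq, ha⟩ := hp
  refine ⟨?_, ha⟩
  have hb := hp' hpq
  clear hp'
  by_cases hpi : p = i <;> by_cases hpj : p = j <;> by_cases hqi : q = i <;> by_cases hqj : q = j
  all_goals subst_vars; simp_all [swap_apply_of_ne_of_ne] <;> order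

lemma invCount_lt_invCount_mul_swap (hij : i < j) (hv : a i < a j) :
    invCount a < invCount (a * swap i j) := by
  set b := a * swap i j
  set s := Prod.map (swap i j) (swap i j)
  have hs : ∀ p, s (s p) = p := fun p => by simp [s, Prod.map_map, ← Perm.coe_mul]
  have hij_mem : (i, j) ∈ inversions b := by simpa [b] using ⟨hij, hv⟩
  -- keep the inversions shared with `b`, and move the others by the transposition
  have hcard : #(inversions a) ≤ #((inversions b).erase (i, j)) := by
    refine card_le_card_of_injOn (fun p => if p ∈ inversions b then p else s p) ?_ ?_
    · intro p hp
      simp only [coe_erase, Set.mem_sdiff, mem_coe, Set.mem_singleton_iff]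
      split_ifs with hpb
      · refine ⟨hpb, ?_⟩
        rintro rfl
        exact lt_asymm hv (mem_inversions.1 hp).2
      · refine ⟨map_swap_mem_inversions_mul_swap hij hv hp hpb, fun h => ?_⟩
        have hp1 : p = (j, i) := by rw [← hs p, h]; simp [s]
        exact lt_asymm hij (by simpa [hp1] using (mem_inversions.1 hp).1)
    · have mem_of_map_mem : ∀ p ∈ inversions a, s p ∈ inversions a → p ∈ inversions b := by
        intro p hp hsp
        refine mem_inversions.2 ⟨(mem_inversions.1 hp).1, ?_⟩
        simpa [b, s] using (mem_inversions.1 hsp).2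
      intro x hx y hy hxy
      simp only [mem_coe] at hx hy
      simp only at hxy
      split_ifs at hxy with h1 h2 h2
      · exact hxy
      · exact absurd (mem_of_map_mem y hy (hxy ▸ hx)) h2
      · exact absurd (mem_of_map_mem x hx (hxy ▸ hy)) h1
      · rw [← hs x, hxy, hs]
  have hlt := card_erase_lt_of_mem hij_mem
  rw [invCount_eq_card_inversions, invCount_eq_card_inversions]
  omega

lemma apply_lt_apply_of_invCount_lt_invCount_mul_swap (hij : i < j)
    (hlen : invCount a < invCount (a * swap i j)) : a i < a j := by
  by_contra! hle
  have hlt : (a * swap i j) i < (a * swap i j) j := by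
    simpa using lt_of_le_of_ne hle (a.injective.ne hij.ne')
  have := invCount_lt_invCount_mul_swap hij hlt
  rw [mul_swap_mul_self] at this
  omega

end Inversions

section Mu

variable {ℓ : ℕ} {lam : Fin ℓ → ℕ}

lemma mu_nonneg_iff_forall_le (w : Perm (Fin ℓ)) :
    (∀ i : Fin ℓ, (0 : ℤ) ≤ (lam (w⁻¹ i) : ℤ) + (i : ℕ) - ((w⁻¹ i : Fin ℓ) : ℕ)) ↔
      ∀ k : Fin ℓ, (k : ℕ) ≤ lam k + w k := by
  constructor
  · intro h k
    have := h (w k)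
    simp only [Perm.coe_inv, symm_apply_apply] at this
    omega
  · intro h i
    have := h (w⁻¹ i)
    simp only [Perm.coe_inv, apply_symm_apply] at this ⊢
    omega

variable {a : Perm (Fin ℓ)} {i j : Fin ℓ}

lemma forall_le_of_forall_le_mul_swap (hanti : Antitone lam) (hij : i < j) (hv : a i < a j)
    (hb : ∀ k : Fin ℓ, (k : ℕ) ≤ lam k + (a * swap i j) k) :
    ∀ k : Fin ℓ, (k : ℕ) ≤ lam k + a k := by
  have hbj := hb j
  simp only [Perm.mul_apply, swap_apply_right] at hbj
  have hij' : (i : ℕ) < j := hij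
  have hv' : (a i : ℕ) < a j := hv
  intro k
  by_cases hki : k = i
  · have := hanti hij.le
    subst hki
    omega
  by_cases hkj : k = j
  · subst hkj
    omega
  simpa [swap_apply_of_ne_of_ne hki hkj] using hb k

lemma forall_le_of_forall_le_mul_swap_of_invCount_lt (hanti : Antitone lam) (hij : i ≠ j)
    (hlen : invCount a < invCount (a * swap i j))
    (hb : ∀ k : Fin ℓ, (k : ℕ) ≤ lam k + (a * swap i j) k) :
    ∀ k : Fin ℓ, (k : ℕ) ≤ lam k + a k := by
  rcases hij.lt_or_gt with hij | hij
  · exact forall_le_of_forall_le_mul_swap hanti hij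
      (apply_lt_apply_of_invCount_lt_invCount_mul_swap hij hlen) hb
  · rw [swap_comm] at hlen hb
    exact forall_le_of_forall_le_mul_swap hanti hij
      (apply_lt_apply_of_invCount_lt_invCount_mul_swap hij hlen) hb

end Mu

theorem mu_nonneg_of_bruhat_le {ℓ : ℕ} (lam : Fin ℓ → ℕ)
    (hanti : Antitone lam) (w u : Equiv.Perm (Fin ℓ))
    (hw : ∀ i : Fin ℓ, (0 : ℤ) ≤ (lam (w⁻¹ i) : ℤ) + (i : ℕ) - ((w⁻¹ i : Fin ℓ) : ℕ))
    (hle : bruhatLE u w) :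
    ∀ i : Fin ℓ, (0 : ℤ) ≤ (lam (u⁻¹ i) : ℤ) + (i : ℕ) - ((u⁻¹ i : Fin ℓ) : ℕ) := by
  rw [mu_nonneg_iff_forall_le] at hw ⊢
  induction hle using Relation.ReflTransGen.head_induction_on with
  | refl => exact hw
  | head hstep _ ih =>
    obtain ⟨⟨i, j, hij, rfl⟩, hlen⟩ := hstep
    exact forall_le_of_forall_le_mul_swap_of_invCount_lt hanti hij hlen ih
end

section
/- Let λ be a partition with ℓ parts and μ(w)_i = λ_{w^{-1}(i)} + i - w^{-1}(i) for w ∈ S_ℓ. The set W_λ = { w ∈ S_ℓ : all entries of μ(w) are nonnegative } is a lower ideal of the Bruhat order: if w ∈ W_λ and u ≤ w, then u ∈ W_λ. -/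
/-- The set `W_λ` of permutations `w` all of whose shifted-action entries
`μ(w)_i = λ_{w⁻¹(i)} + i − w⁻¹(i)` are nonnegative. -/
def Wlam {ℓ : ℕ} (lam : Fin ℓ → ℕ) : Set (Equiv.Perm (Fin ℓ)) :=
  {w | ∀ i : Fin ℓ, (0 : ℤ) ≤ (lam (w⁻¹ i) : ℤ) + (i : ℕ) - ((w⁻¹ i : Fin ℓ) : ℕ)}

/-! A length-increasing step `u < u * swap i j` with `i < j` forces `u i < u j`, because swapping
the values at an inversion strictly lowers the inversion count. Read membership in `W_λ` by
position, as `p ≤ λ_p + w p` for all `p`. The step changes only positions `i` and `j`, and the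
single condition `j ≤ λ_j + u i` of `u * swap i j` at `j` yields both conditions of `u` there:
`i < j ≤ λ_j + u i ≤ λ_i + u i` since `λ` is antitone, and `j ≤ λ_j + u i < λ_j + u j`. -/

lemma apply_lt_apply_of_swap_reverses {m : ℕ} (σ : Equiv.Perm (Fin m)) {i j p q : Fin m}
    (hij : i < j) (hσ : σ j < σ i) (hpq : p < q)
    (hrev : ¬ Equiv.swap i j p < Equiv.swap i j q)
    (h : σ (Equiv.swap i j q) < σ (Equiv.swap i j p)) : σ q < σ p := by
  grind

/-- An inversion `(p, q)` of `σ * swap i j` is sent to `(swap i j p, swap i j q)` if that pair is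
still increasing and to itself otherwise; this injects into the inversions of `σ` other than
`(i, j)`. -/
theorem invCount_mul_swap_lt {m : ℕ} (σ : Equiv.Perm (Fin m)) {i j : Fin m} (hij : i < j)
    (hσ : σ j < σ i) : invCount (σ * Equiv.swap i j) < invCount σ := by
  set t := Equiv.swap i j
  let f : Fin m × Fin m → Fin m × Fin m := fun p => if t p.1 < t p.2 then (t p.1, t p.2) else p
  have hmem : (i, j) ∈ Finset.univ.filter fun p : Fin m × Fin m => p.1 < p.2 ∧ σ p.2 < σ p.1 := by
    simp [hij, hσ]
  refine (Finset.card_le_card_of_injOn f ?_ ?_).trans_lt (Finset.card_erase_lt_of_mem hmem)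
  · intro x hx
    obtain ⟨-, hlt, hinv⟩ := Finset.mem_filter.1 (Finset.mem_coe.1 hx)
    rw [Finset.mem_coe, Finset.mem_erase, Finset.mem_filter]
    simp only [Equiv.Perm.mul_apply] at hinv
    by_cases hord : t x.1 < t x.2
    · grind
    · grind [apply_lt_apply_of_swap_reverses σ hij hσ hlt hord hinv]
  · intro p _ q _ hfpq
    grind

lemma apply_lt_apply_of_invCount_lt_invCount_mul_swap_s2 {m : ℕ} {a : Equiv.Perm (Fin m)}
    {i j : Fin m} (hij : i < j) (h : invCount a < invCount (a * Equiv.swap i j)) : a i < a j :=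
  lt_of_le_of_ne (not_lt.1 fun hji => (invCount_mul_swap_lt a hij hji).not_gt h)
    (a.injective.ne hij.ne)

lemma mem_Wlam_iff {ℓ : ℕ} (lam : Fin ℓ → ℕ) (w : Equiv.Perm (Fin ℓ)) :
    w ∈ Wlam lam ↔ ∀ p : Fin ℓ, (p : ℕ) ≤ lam p + w p := by
  refine ⟨fun hw p => ?_, fun hw k => ?_⟩
  · have := hw (w p)
    simp only [Equiv.Perm.coe_inv, Equiv.symm_apply_apply] at this
    omega
  · have := hw (w⁻¹ k)
    simp only [Equiv.Perm.coe_inv, Equiv.apply_symm_apply] at this ⊢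
    omega

lemma mem_Wlam_of_mul_swap_mem {ℓ : ℕ} {lam : Fin ℓ → ℕ} (hanti : Antitone lam)
    {a : Equiv.Perm (Fin ℓ)} {i j : Fin ℓ} (hij : i < j) (ha : a i < a j)
    (hb : a * Equiv.swap i j ∈ Wlam lam) : a ∈ Wlam lam := by
  rw [mem_Wlam_iff] at hb ⊢
  have hbj := hb j
  simp only [Equiv.Perm.mul_apply, Equiv.swap_apply_right] at hbj
  have hai : (i : ℕ) ≤ lam i + a i := by
    have : lam j ≤ lam i := hanti hij.le
    have : (i : ℕ) < j := hij
    omega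
  have haj : (j : ℕ) ≤ lam j + a j := by
    have : (a i : ℕ) < a j := ha
    omega
  intro p
  by_cases hpi : p = i
  · rwa [hpi]
  by_cases hpj : p = j
  · rwa [hpj]
  simpa only [Equiv.Perm.mul_apply, Equiv.swap_apply_of_ne_of_ne hpi hpj] using hb p

lemma mem_Wlam_of_bruhat_step {ℓ : ℕ} {lam : Fin ℓ → ℕ} (hanti : Antitone lam)
    {a : Equiv.Perm (Fin ℓ)} {i j : Fin ℓ} (hij : i ≠ j)
    (h : invCount a < invCount (a * Equiv.swap i j))
    (hb : a * Equiv.swap i j ∈ Wlam lam) : a ∈ Wlam lam := by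
  rcases hij.lt_or_gt with hij | hji
  · exact mem_Wlam_of_mul_swap_mem hanti hij
      (apply_lt_apply_of_invCount_lt_invCount_mul_swap_s2 hij h) hb
  · rw [Equiv.swap_comm] at h hb
    exact mem_Wlam_of_mul_swap_mem hanti hji
      (apply_lt_apply_of_invCount_lt_invCount_mul_swap_s2 hji h) hb

theorem Wlam_lower_ideal {ℓ : ℕ} (lam : Fin ℓ → ℕ) (hanti : Antitone lam) :
    ∀ w ∈ Wlam lam, ∀ u : Equiv.Perm (Fin ℓ), bruhatLE u w → u ∈ Wlam lam := by
  intro w hw u hu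
  induction hu using Relation.ReflTransGen.head_induction_on with
  | refl => exact hw
  | head hstep _ ih =>
    obtain ⟨⟨i, j, hij, rfl⟩, hlt⟩ := hstep
    exact mem_Wlam_of_bruhat_step hanti hij hlt ih
end

section
/- Diagonal shifting preserves content: let μ be a tuple of rows (a 1-row multicomposition) where the first box of the i-th level has content κ_i with κ_i − κ_{i+1} = 1, and suppose applying s_i moves the last μ_i − μ_{i+1} + 1 boxes of level i diagonally southeast into level i+1 (assuming μ_i − μ_{i+1} + 1 ≥ 0 boxes exist). Then the multiset of contents of all boxes of the resulting multicomposition equals the multiset of contents of μ. -/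
/-!
Level `i + 1` starts one content below level `i`, so splitting off its first box (content `b`)
leaves a row starting at `b + 1`, just like level `i`. The move `s_i` thus merely exchanges the
lengths of two rows that both start at `b + 1`, and the box of content `b` stays in level `i + 1`.
-/

/-- The multiset of contents of a 1-row multicomposition with charge δ. -/
def contentMultiset {ℓ : ℕ} (δ : ℤ) (μ : Fin ℓ → ℕ) : Multiset ℤ :=
  ∑ i : Fin ℓ, (Multiset.range (μ i)).map fun c => δ - (i : ℕ) + (c : ℤ)

theorem Fintype.sum_eq_sum_of_eq_off_pair {ι M : Type*} [Fintype ι] [DecidableEq ι]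
    [AddCommMonoid M] {f g : ι → M} {i j : ι} (hij : i ≠ j) (hpair : f i + f j = g i + g j)
    (hoff : ∀ t, t ≠ i → t ≠ j → f t = g t) : ∑ t, f t = ∑ t, g t := by
  have hsub := Finset.subset_univ {i, j}
  rw [← Finset.sum_sdiff hsub, ← Finset.sum_sdiff hsub, Finset.sum_pair hij,
    Finset.sum_pair hij, hpair]
  congr 1
  refine Finset.sum_congr rfl fun t ht => hoff t ?_ ?_ <;> simp_all

def rowContents (a : ℤ) (n : ℕ) : Multiset ℤ :=
  (Multiset.range n).map fun c : ℕ => a + c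

theorem rowContents_succ (a : ℤ) (n : ℕ) :
    rowContents a (n + 1) = a ::ₘ rowContents (a + 1) n := by
  simp only [rowContents, ← Multiset.coe_range, List.range_succ_eq_map, Multiset.map_coe,
    List.map_cons, List.map_map]
  simp [Function.comp_def, add_assoc, add_comm (1 : ℤ)]

theorem rowContents_add_rowContents_swap (b : ℤ) (m n : ℕ) :
    rowContents (b + 1) m + rowContents b (n + 1) =
      rowContents (b + 1) n + rowContents b (m + 1) := by
  rw [rowContents_succ, rowContents_succ, Multiset.add_cons, Multiset.add_cons, add_comm]

theorem contentMultiset_eq_sum_rowContents {ℓ : ℕ} (δ : ℤ) (μ : Fin ℓ → ℕ) :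
    contentMultiset δ μ = ∑ t : Fin ℓ, rowContents (δ - (t : ℕ)) (μ t) := by
  simp only [contentMultiset, rowContents]
  congr! 2 with t
  -- `contentMultiset` elaborates `c` as an integer, coercing the whole `Multiset.range` to `ℤ`.
  rw [show (Multiset.range (μ t) : Multiset ℤ) = (Multiset.range (μ t)).map Nat.cast
    from Multiset.bind_singleton _ _, Multiset.map_map]
  rfl

theorem diagonal_shift_preserves_content_general {ℓ : ℕ} (δ : ℤ) (μ : Fin ℓ → ℕ)
    (i j : Fin ℓ) (hij : (j : ℕ) = (i : ℕ) + 1)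
    (hmove : 1 ≤ μ j)   -- the shifted level `i` must have μ_{i+1} − 1 ≥ 0 boxes
    :
    contentMultiset δ
        (fun t => if t = i then μ j - 1 else if t = j then μ i + 1 else μ t) =
      contentMultiset δ μ := by
  have hji : j ≠ i := fun h => by simp [h] at hij
  have hδ : δ - (i : ℕ) = δ - (j : ℕ) + 1 := by rw [hij]; push_cast; ring
  obtain ⟨n, hn⟩ : ∃ n, μ j = n + 1 := Nat.exists_eq_add_of_le' hmove
  rw [contentMultiset_eq_sum_rowContents, contentMultiset_eq_sum_rowContents]
  refine Fintype.sum_eq_sum_of_eq_off_pair hji.symm ?_ fun t hti htj => by simp [hti, htj]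
  simp only [if_pos, if_neg hji, hn, hδ, Nat.add_sub_cancel]
  exact rowContents_add_rowContents_swap _ _ _

theorem diagonal_shift_preserves_content {ℓ : ℕ} (δ : ℤ) (μ : Fin ℓ → ℕ)
    (i j : Fin ℓ) (hij : (j : ℕ) = (i : ℕ) + 1)
    (hmove : 1 ≤ μ j)   -- the shifted level `i` must have μ_{i+1} − 1 ≥ 0 boxes
    (hbox : μ j ≤ μ i + 1)  -- there are μ_i − μ_{i+1} + 1 ≥ 0 boxes to move
    :
    contentMultiset δ
        (fun t => if t = i then μ j - 1 else if t = j then μ i + 1 else μ t) =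
      contentMultiset δ μ :=
  diagonal_shift_preserves_content_general δ μ i j hij hmove
end

section
/- Let λ be a partition. For the 1-row multipartition interpretation, suppose ν is a multipartition (with the fixed multicharge κ_i = δ − i + 1) such that some level ν^{(i)} has at least two rows, and μ is a multipartition in which every level has at most one row, with the same total multiset of contents. Then there is no content-preserving bijection f from the boxes of μ to the boxes of ν such that every box is either fixed or moved strictly to a higher level index (moved downward). -/
/-!
STATEMENT 14: Let ν be a multipartition (multicharge κ_l = δ − l + 1) having a
level with at least two rows, and μ a multipartition every level of which has at
most one row.  Then there is no content-preserving bijection f from the boxes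
of μ to the boxes of ν such that every box is either fixed or moved strictly to
a higher level index (moved downward).

A multipartition with ℓ levels is modeled as ν : Fin ℓ → ℕ → ℕ, where ν l r is
the length of the (0-indexed) row r of level l; boxes are triples (l, r, c)
with c < ν l r, and the box (l, r, c) has content (δ − l) + c − r (the
0-indexed form of κ_l + c − r).
-/

/-- Boxes of a multipartition. -/
def MBox {ℓ : ℕ} (ν : Fin ℓ → ℕ → ℕ) : Type :=
  {b : Fin ℓ × ℕ × ℕ // b.2.2 < ν b.1 b.2.1}

/-- Content of a box. -/
def mcontent {ℓ : ℕ} (δ : ℤ) {ν : Fin ℓ → ℕ → ℕ} (b : MBox ν) : ℤ :=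
  (δ - (b.1.1 : ℕ)) + (b.1.2.2 : ℤ) - (b.1.2.1 : ℕ)

/-!
The box `(l₀, 1, 0)` of `ν` lies strictly below the diagonal, so its content `δ - l₀ - 1` is
smaller than that of every first-row box at a level `≤ l₀`.  Its preimage under `f` is such a
box, since all boxes of `μ` are in the first row and `f` never moves a box to a lower level.
-/

theorem MBox.row_eq_zero {ℓ : ℕ} {μ : Fin ℓ → ℕ → ℕ} (hμone : ∀ l r, 1 ≤ r → μ l r = 0)
    (a : MBox μ) : a.val.2.1 = 0 := by
  by_contra h
  have := a.property
  rw [hμone _ _ (Nat.one_le_iff_ne_zero.mpr h)] at this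
  exact Nat.not_lt_zero _ this

theorem mcontent_lt_of_level_le {ℓ : ℕ} (δ : ℤ) {μ ν : Fin ℓ → ℕ → ℕ} (a : MBox μ)
    (b : MBox ν) (ha : a.val.2.1 = 0) (hb : b.val.2.2 < b.val.2.1)
    (hle : (a.val.1 : ℕ) ≤ b.val.1) : mcontent δ b < mcontent δ a := by
  unfold mcontent
  rw [ha]
  omega

theorem no_downward_content_bijection_general {ℓ : ℕ} (δ : ℤ) (μ ν : Fin ℓ → ℕ → ℕ)
    (hμone : ∀ l r, 1 ≤ r → μ l r = 0)        -- μ is a 1-row multipartition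
    (hνmulti : ∃ l, 0 < ν l 1) :              -- ν has a level with ≥ 2 rows
    ¬ ∃ f : MBox μ ≃ MBox ν, ∀ b : MBox μ,
        mcontent δ (f b) = mcontent δ b ∧
        ((f b).val = b.val ∨ (b.val.1 : ℕ) < ((f b).val.1 : ℕ)) := by
  rintro ⟨f, hf⟩
  obtain ⟨l₀, hl₀⟩ := hνmulti
  let b : MBox ν := ⟨(l₀, 1, 0), hl₀⟩
  obtain ⟨hcontent, hmove⟩ := hf (f.symm b)
  rw [f.apply_symm_apply] at hcontent hmove
  have hle : ((f.symm b).val.1 : ℕ) ≤ b.val.1 := by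
    rcases hmove with hfixed | hlower
    · rw [hfixed]
    · exact hlower.le
  exact (mcontent_lt_of_level_le δ (f.symm b) b (MBox.row_eq_zero hμone _) Nat.zero_lt_one
    hle).ne hcontent

theorem no_downward_content_bijection {ℓ : ℕ} (δ : ℤ) (μ ν : Fin ℓ → ℕ → ℕ)
    (hμpart : ∀ l, Antitone (μ l)) (hνpart : ∀ l, Antitone (ν l))
    (hμone : ∀ l r, 1 ≤ r → μ l r = 0)        -- μ is a 1-row multipartition
    (hνmulti : ∃ l, 0 < ν l 1) :              -- ν has a level with ≥ 2 rows
    ¬ ∃ f : MBox μ ≃ MBox ν, ∀ b : MBox μ,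
        mcontent δ (f b) = mcontent δ b ∧
        ((f b).val = b.val ∨ (b.val.1 : ℕ) < ((f b).val.1 : ℕ)) :=
  no_downward_content_bijection_general δ μ ν hμone hνmulti
end
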